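/- arXiv:1707.07807 — 4 statements merged into one kernel-verified Lean document; each statement's English description precedes it below -/
import Mathlib

section
/- Let n be a natural number and let B : ℝⁿ × ℝⁿ → ℝⁿ be a symmetric bilinear map. Then the following are equivalent: (i) ⟨B(y,y), y⟩ = 0 for all y ∈ ℝⁿ, where ⟨,⟩ is the Euclidean inner product; (ii) there exists a linear map S from ℝⁿ to the space of skew-adjoint linear endomorphisms of ℝⁿ (with respect to the Euclidean inner product) such that B(y,y) = S(y)(y) for all y ∈ ℝⁿ. -/
open RealInnerProductSpace

/-- A symmetric bilinear map `B : ℝⁿ × ℝⁿ → ℝⁿ` satisfies the cancellation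
condition `⟨B(y,y), y⟩ = 0` for all `y` (Euclidean inner product) if and only if there is a
linear map `S` from `ℝⁿ` to the skew-adjoint endomorphisms of `ℝⁿ` with `B(y,y) = S(y)(y)`. -/
theorem stmt_0 (n : ℕ)
    (B : EuclideanSpace ℝ (Fin n) →ₗ[ℝ] EuclideanSpace ℝ (Fin n) →ₗ[ℝ] EuclideanSpace ℝ (Fin n))
    (hBsymm : ∀ y z, B y z = B z y) :
    (∀ y, ⟪B y y, y⟫ = 0) ↔
      ∃ S : EuclideanSpace ℝ (Fin n) →ₗ[ℝ]
          (EuclideanSpace ℝ (Fin n) →ₗ[ℝ] EuclideanSpace ℝ (Fin n)),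
        (∀ y u v, ⟪S y u, v⟫ = -⟪u, S y v⟫) ∧ (∀ y, B y y = S y y) := by
  constructor
  · intro h
    -- key polarization identity 1
    have key1 : ∀ x y : EuclideanSpace ℝ (Fin n), ⟪B x x, y⟫ = -2 * ⟪B x y, x⟫ := by
      intro x y
      have h1 := h (x + y)
      have h2 := h (x - y)
      have hx := h x
      have hy := h y
      simp only [map_add, map_sub, LinearMap.add_apply, LinearMap.sub_apply, inner_add_left,
        inner_add_right, inner_sub_left, inner_sub_right, hBsymm y x] at h1 h2
      have hc : ∀ a b : EuclideanSpace ℝ (Fin n), ⟪B a b, a⟫ = ⟪B a a, b⟫ →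
          True := fun _ _ _ => trivial
      have hsy : ⟪B x y, y⟫ = ⟪B y y, x⟫ ∨ True := Or.inr trivial
      nlinarith [real_inner_comm (B x y) x, real_inner_comm (B x x) y,
        real_inner_comm (B y y) x, real_inner_comm (B x y) y]
    -- cyclic identity
    have cyc : ∀ x y z : EuclideanSpace ℝ (Fin n),
        ⟪B x y, z⟫ + ⟪B y z, x⟫ + ⟪B z x, y⟫ = 0 := by
      intro x y z
      have h1 := key1 (x + z) y
      have h2 := key1 x y
      have h3 := key1 z y
      simp only [map_add, LinearMap.add_apply, inner_add_left, inner_add_right, hBsymm z x] at h1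
      have e1 : ⟪B y z, x⟫ = ⟪B z y, x⟫ := by rw [hBsymm y z]
      have e2 : ⟪B z x, y⟫ = ⟪B x z, y⟫ := by rw [hBsymm z x]
      nlinarith [h1, h2, h3, e1, e2]
    classical
    -- define S
    set E := EuclideanSpace ℝ (Fin n)
    let S : E →ₗ[ℝ] E →ₗ[ℝ] E :=
      LinearMap.mk₂ ℝ
        (fun y u => (4/3 : ℝ) • B y u + (2/3 : ℝ) • (LinearMap.adjoint (B u)) y)
        (by intro y y' u; simp [map_add, smul_add]; abel)
        (by intro c y u; simp [map_smul, smul_smul, smul_add, mul_comm])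
        (by intro y u u'; simp [map_add, smul_add, LinearMap.add_apply]; abel)
        (by intro c y u; simp [map_smul, smul_smul, smul_add, LinearMap.smul_apply, mul_comm])
    refine ⟨S, ?_, ?_⟩
    · intro y u v
      have hS : ∀ a b : E, (S a) b = (4/3 : ℝ) • B a b + (2/3 : ℝ) • (LinearMap.adjoint (B b)) a := by
        intro a b; rfl
      rw [hS, hS]
      simp only [inner_add_left, inner_add_right, real_inner_smul_left, real_inner_smul_right,
        LinearMap.adjoint_inner_left, LinearMap.adjoint_inner_right]
      have c1 := cyc y u v
      have c2 := cyc y v u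
      have e1 : ⟪y, (B u) v⟫ = ⟪(B u) v, y⟫ := real_inner_comm _ _
      have e2 : ⟪u, (B y) v⟫ = ⟪(B y) v, u⟫ := real_inner_comm _ _
      have e3 : ⟪(B u) y, v⟫ = ⟪(B y) u, v⟫ := by rw [hBsymm u y]
      have e4 : ⟪(B v) y, u⟫ = ⟪(B y) v, u⟫ := by rw [hBsymm v y]
      have e5 : ⟪(B v) u, y⟫ = ⟪(B u) v, y⟫ := by rw [hBsymm v u]
      linarith
    · intro y
      have hS : (S y) y = (4/3 : ℝ) • B y y + (2/3 : ℝ) • (LinearMap.adjoint (B y)) y := rfl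
      have hadj : (LinearMap.adjoint (B y)) y = -(1/2 : ℝ) • B y y := by
        apply ext_inner_right ℝ
        intro v
        rw [LinearMap.adjoint_inner_left, real_inner_smul_left]
        have := key1 y v
        have e : ⟪y, B y v⟫ = ⟪B y v, y⟫ := real_inner_comm _ _
        linarith
      rw [hS, hadj, smul_smul]
      norm_num
      module
  · rintro ⟨S, hskew, heq⟩ y
    have h1 := hskew y y y
    have h2 : ⟪y, S y y⟫ = ⟪S y y, y⟫ := real_inner_comm _ _
    rw [heq y]
    linarith
end

section
/- Let n be a natural number and let B : ℝⁿ × ℝⁿ → ℝⁿ be a symmetric bilinear map satisfying ⟨B(y,y), y⟩ = 0 for all y ∈ ℝⁿ. Define S(y₁) : ℝⁿ → ℝⁿ for each y₁ ∈ ℝⁿ by the duality relation ⟨S(y₁) y₂, y₃⟩ = (2/3)( ⟨B(y₁,y₂), y₃⟩ - ⟨B(y₁,y₃), y₂⟩ ) for all y₂, y₃ ∈ ℝⁿ. Then for every y ∈ ℝⁿ, S(y) is skew-adjoint (⟨S(y) u, v⟩ = -⟨u, S(y) v⟩ for all u,v) and S(y)(y) = B(y,y). -/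
open RealInnerProductSpace

/-- If `B` is a symmetric bilinear map on `ℝⁿ` obeying the cancellation
condition, and `S(y₁)` is defined by the duality relation
`⟨S(y₁) y₂, y₃⟩ = (2/3)(⟨B(y₁,y₂), y₃⟩ - ⟨B(y₁,y₃), y₂⟩)`, then each `S(y)` is
skew-adjoint and `S(y)(y) = B(y,y)`. -/
theorem stmt_1 (n : ℕ)
    (B : EuclideanSpace ℝ (Fin n) →ₗ[ℝ] EuclideanSpace ℝ (Fin n) →ₗ[ℝ] EuclideanSpace ℝ (Fin n))
    (hBsymm : ∀ y z, B y z = B z y)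
    (hcancel : ∀ y, ⟪B y y, y⟫ = 0)
    (S : EuclideanSpace ℝ (Fin n) → EuclideanSpace ℝ (Fin n) → EuclideanSpace ℝ (Fin n))
    (hS : ∀ y₁ y₂ y₃, ⟪S y₁ y₂, y₃⟫ = (2 / 3) * (⟪B y₁ y₂, y₃⟫ - ⟪B y₁ y₃, y₂⟫)) :
    ∀ y : EuclideanSpace ℝ (Fin n),
      (∀ u v, ⟪S y u, v⟫ = -⟪u, S y v⟫) ∧ S y y = B y y := by
  intro y
  constructor
  · intro u v
    have h2 : ⟪u, S y v⟫ = ⟪S y v, u⟫ := real_inner_comm _ _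
    rw [hS, h2, hS]
    ring
  · apply ext_inner_right ℝ
    intro z
    rw [hS]
    have hp : ⟪B y y, z⟫ = -2 * ⟪B y z, y⟫ := by
      have h1 := hcancel (y + z)
      have h2 := hcancel (y - z)
      simp only [map_add, map_sub, LinearMap.add_apply, LinearMap.sub_apply,
        inner_add_left, inner_sub_left, inner_add_right, inner_sub_right] at h1 h2
      have hs1 : ⟪B z y, y⟫ = ⟪B y z, y⟫ := by rw [hBsymm]
      have hs2 : ⟪B z y, z⟫ = ⟪B y z, z⟫ := by rw [hBsymm]
      have h0 := hcancel y
      have h0' := hcancel z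
      linarith
    rw [hp]
    ring
end

section
/- Let n be a natural number and let B : ℝⁿ × ℝⁿ → ℝⁿ be a symmetric bilinear map satisfying the cancellation condition ⟨B(y,y), y⟩ = 0 for all y ∈ ℝⁿ, where ⟨,⟩ is the Euclidean inner product. Then for every initial datum y₀ ∈ ℝⁿ there exists a differentiable function y : ℝ → ℝⁿ defined for all time, with y(0) = y₀ and y'(t) = B(y(t), y(t)) for all t ∈ ℝ. -/
open RealInnerProductSpace

/-!
The cancellation condition makes `‖y‖` a conserved quantity, so a solution starting at `y₀` never
leaves the sphere of radius `R = ‖y₀‖`. Precomposing `B` with the radial retraction onto the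
closed ball of radius `R` gives a vector field that is bounded and globally Lipschitz, so it has
a global solution (Picard–Lindelöf on arbitrarily long time intervals, glued by uniqueness).
The retraction is radial, so the truncated field still satisfies the cancellation condition;
hence this solution stays on the sphere, where the truncated field agrees with `B`.
-/

open Set NNReal Topology

section BallRetraction

variable {E : Type*} [NormedAddCommGroup E] [NormedSpace ℝ E]

-- Equals `x` if `‖x‖ ≤ R` and `(R / ‖x‖) • x` otherwise; for `R = 0` the convention `0 / 0 = 0`
-- still makes it the retraction onto `{0}`.
noncomputable def ballRetraction (R : ℝ≥0) (x : E) : E := ((R : ℝ) / max (R : ℝ) ‖x‖) • x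

lemma ballRetraction_of_norm_le {R : ℝ≥0} {x : E} (hx : ‖x‖ ≤ R) : ballRetraction R x = x := by
  rcases eq_or_ne (R : ℝ) 0 with hR | hR
  · simp [ballRetraction, norm_le_zero_iff.mp (hR ▸ hx)]
  · simp [ballRetraction, max_eq_left hx, div_self hR]

lemma norm_ballRetraction_le (R : ℝ≥0) (x : E) : ‖ballRetraction R x‖ ≤ R := by
  rw [ballRetraction, norm_smul, Real.norm_of_nonneg (by positivity), div_mul_eq_mul_div]
  exact div_le_of_le_mul₀ (by positivity) R.2
    (mul_le_mul_of_nonneg_left (le_max_right _ _) R.2)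

lemma lipschitzWith_ballRetraction (R : ℝ≥0) : LipschitzWith 2 (ballRetraction (E := E) R) := by
  rcases eq_or_ne (R : ℝ) 0 with hR | hR
  · have hzero : ballRetraction (E := E) R = fun _ ↦ 0 := by ext x; simp [ballRetraction, hR]
    exact hzero ▸ LipschitzWith.const' 0
  refine LipschitzWith.of_dist_le_mul fun x y ↦ ?_
  set mx := max (R : ℝ) ‖x‖
  set my := max (R : ℝ) ‖y‖
  have hRpos : 0 < (R : ℝ) := lt_of_le_of_ne R.2 hR.symm
  have hmx : 0 < mx := lt_max_of_lt_left hRpos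
  have hmy : 0 < my := lt_max_of_lt_left hRpos
  have hcx : R / mx ≤ 1 := div_le_one_of_le₀ (le_max_left _ _) hmx.le
  have hcy : ‖y‖ / my ≤ 1 := div_le_one_of_le₀ (le_max_right _ _) hmy.le
  have hm : |my - mx| ≤ ‖x - y‖ := by
    rw [show my - mx = max ‖y‖ R - max ‖x‖ R by simp only [mx, my, max_comm], norm_sub_rev]
    exact (abs_max_sub_max_le_abs _ _ _).trans (abs_norm_sub_norm_le y x)
  have hsplit : ballRetraction R x - ballRetraction R y
      = (R / mx) • (x - y) + (R / mx - R / my) • y := by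
    simp only [ballRetraction, smul_sub, sub_smul]; abel
  have hcoeff : |R / mx - R / my| * ‖y‖ = R / mx * |my - mx| * (‖y‖ / my) := by
    rw [show (R : ℝ) / mx - R / my = R / mx * ((my - mx) / my) by field_simp]
    simp only [abs_mul, abs_div, abs_of_pos hmy, abs_of_pos hmx, abs_of_pos hRpos]
    ring
  rw [dist_eq_norm, hsplit, dist_eq_norm]
  calc ‖(R / mx) • (x - y) + (R / mx - R / my) • y‖
      ≤ R / mx * ‖x - y‖ + |R / mx - R / my| * ‖y‖ := by
        refine (norm_add_le _ _).trans ?_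
        rw [norm_smul, norm_smul, Real.norm_of_nonneg (by positivity), Real.norm_eq_abs]
    _ ≤ 1 * ‖x - y‖ + 1 * ‖x - y‖ * 1 := by
        rw [hcoeff]; gcongr
    _ = 2 * ‖x - y‖ := by ring

end BallRetraction

lemma LipschitzWith.bilinear_apply_self {X E F : Type*} [PseudoMetricSpace X]
    [NormedAddCommGroup E] [NormedSpace ℝ E] [NormedAddCommGroup F] [NormedSpace ℝ F]
    (B : E →L[ℝ] E →L[ℝ] F) {g : X → E} {K R : ℝ≥0} (hg : LipschitzWith K g)
    (hgR : ∀ x, ‖g x‖ ≤ R) : LipschitzWith (2 * ‖B‖₊ * R * K) fun x ↦ B (g x) (g x) := by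
  refine LipschitzWith.of_dist_le_mul fun x y ↦ ?_
  have hsplit : B (g x) (g x) - B (g y) (g y) = B (g x - g y) (g x) + B (g y) (g x - g y) := by
    simp only [map_sub, sub_apply]; abel
  have hgd : ‖g x - g y‖ ≤ K * dist x y := by rw [← dist_eq_norm]; exact hg.dist_le_mul x y
  rw [dist_eq_norm, hsplit]
  push_cast
  calc ‖B (g x - g y) (g x) + B (g y) (g x - g y)‖
      ≤ ‖B‖ * ‖g x - g y‖ * ‖g x‖ + ‖B‖ * ‖g y‖ * ‖g x - g y‖ :=
        (norm_add_le _ _).trans (add_le_add (B.le_opNorm₂ _ _) (B.le_opNorm₂ _ _))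
    _ ≤ ‖B‖ * (K * dist x y) * R + ‖B‖ * R * (K * dist x y) := by
        gcongr <;> exact hgR _
    _ = 2 * ‖B‖ * R * K * dist x y := by ring

section GlobalExistence

variable {E : Type*} [NormedAddCommGroup E] [NormedSpace ℝ E] [CompleteSpace E]
  {F : E → E} {K L : ℝ≥0}

lemma exists_forall_abs_lt_hasDerivAt_of_lipschitzWith_of_norm_le (hF : LipschitzWith K F)
    (hL : ∀ x, ‖F x‖ ≤ L) (x₀ : E) (a : ℝ≥0) :
    ∃ y : ℝ → E, y 0 = x₀ ∧ ∀ t : ℝ, |t| < a → HasDerivAt y (F (y t)) t := by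
  have hpl : IsPicardLindelof (fun _ ↦ F) (tmin := -a) (tmax := a)
      ⟨0, by simp⟩ x₀ (L * a) 0 L K :=
    .of_time_independent (fun x _ ↦ hL x) hF.lipschitzOnWith (by simp)
  obtain ⟨y, hy0, hy⟩ := hpl.exists_eq_forall_mem_Icc_hasDerivWithinAt₀
  refine ⟨y, hy0, fun t ht ↦ ?_⟩
  rw [abs_lt] at ht
  exact (hy t ⟨ht.1.le, ht.2.le⟩).hasDerivAt (Icc_mem_nhds ht.1 ht.2)

lemma exists_forall_hasDerivAt_of_lipschitzWith_of_norm_le (hF : LipschitzWith K F)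
    (hL : ∀ x, ‖F x‖ ≤ L) (x₀ : E) :
    ∃ y : ℝ → E, y 0 = x₀ ∧ ∀ t, HasDerivAt y (F (y t)) t := by
  choose γ hγ0 hγ using exists_forall_abs_lt_hasDerivAt_of_lipschitzWith_of_norm_le hF hL x₀
  have hagree : ∀ a b : ℝ≥0, ∀ s : ℝ, |s| < a → |s| < b → γ a s = γ b s := by
    intro a b s hsa hsb
    set m : ℝ := min a b
    have hm : |s| < m := lt_min hsa hsb
    have hsol : ∀ c : ℝ≥0, m ≤ c →
        ∀ t ∈ Ioo (-m) m, HasDerivAt (γ c) (F (γ c t)) t ∧ γ c t ∈ univ :=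
      fun c hc t ht ↦ ⟨hγ c t ((abs_lt.2 ht).trans_le hc), trivial⟩
    exact ODE_solution_unique_of_mem_Ioo (fun _ _ ↦ hF.lipschitzOnWith)
      (abs_lt.1 (abs_zero.trans_lt ((abs_nonneg s).trans_lt hm)))
      (hsol a (min_le_left _ _)) (hsol b (min_le_right _ _)) ((hγ0 a).trans (hγ0 b).symm)
      (abs_lt.1 hm)
  have hlt : ∀ s : ℝ, |s| < ↑(‖s‖₊ + 1) := fun s ↦ by simp
  refine ⟨fun t ↦ γ (‖t‖₊ + 1) t, hγ0 _, fun t ↦ ?_⟩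
  have heq : (fun s ↦ γ (‖s‖₊ + 1) s) =ᶠ[𝓝 t] γ (‖t‖₊ + 1) := by
    filter_upwards [(isOpen_lt continuous_abs continuous_const).mem_nhds (hlt t)] with s hs
    exact hagree _ _ s (hlt s) hs
  exact (hγ _ t (hlt t)).congr_of_eventuallyEq heq

end GlobalExistence

lemma norm_eq_of_hasDerivAt_of_inner_eq_zero {E : Type*} [NormedAddCommGroup E]
    [InnerProductSpace ℝ E] {F : E → E} (hF : ∀ x, ⟪F x, x⟫ = 0) {y : ℝ → E}
    (hy : ∀ t, HasDerivAt y (F (y t)) t) (t : ℝ) : ‖y t‖ = ‖y 0‖ := by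
  have hderiv : ∀ s, HasDerivAt (‖y ·‖ ^ 2) 0 s := fun s ↦ by
    have h := (hy s).norm_sq
    rwa [real_inner_comm, hF, mul_zero] at h
  have hconst := is_const_of_deriv_eq_zero (fun s ↦ (hderiv s).differentiableAt)
    (fun s ↦ (hderiv s).deriv) t 0
  exact (sq_eq_sq₀ (norm_nonneg _) (norm_nonneg _)).mp hconst

theorem stmt_4_general (n : ℕ)
    (B : EuclideanSpace ℝ (Fin n) →ₗ[ℝ] EuclideanSpace ℝ (Fin n) →ₗ[ℝ] EuclideanSpace ℝ (Fin n))
    (hcancel : ∀ y, ⟪B y y, y⟫ = 0)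
    (y₀ : EuclideanSpace ℝ (Fin n)) :
    ∃ y : ℝ → EuclideanSpace ℝ (Fin n),
      y 0 = y₀ ∧ ∀ t : ℝ, HasDerivAt y (B (y t) (y t)) t := by
  set R := ‖y₀‖₊
  set Bc := B.toContinuousBilinearMap
  set F := fun x ↦ Bc (ballRetraction R x) (ballRetraction R x)
  have hF_lip : LipschitzWith (2 * ‖Bc‖₊ * R * 2) F :=
    (lipschitzWith_ballRetraction R).bilinear_apply_self Bc (norm_ballRetraction_le R)
  have hF_le : ∀ x, ‖F x‖ ≤ (‖Bc‖₊ * R * R : ℝ≥0) := fun x ↦ (Bc.le_opNorm₂ _ _).trans <| by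
    push_cast
    gcongr <;> exact norm_ballRetraction_le R x
  have hF_inner : ∀ x, ⟪F x, x⟫ = 0 := fun x ↦ by
    simp [F, Bc, ballRetraction, inner_smul_left, hcancel]
  obtain ⟨y, hy0, hy⟩ := exists_forall_hasDerivAt_of_lipschitzWith_of_norm_le hF_lip hF_le y₀
  have hy_norm (t : ℝ) : ‖y t‖ ≤ R := by
    simp [R, norm_eq_of_hasDerivAt_of_inner_eq_zero hF_inner hy t, hy0]
  refine ⟨y, hy0, fun t ↦ ?_⟩
  simpa [F, Bc, ballRetraction_of_norm_le (hy_norm t)] using hy t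

/-- If `B` is a symmetric bilinear map on Euclidean `ℝⁿ` obeying the
cancellation condition `⟨B(y,y), y⟩ = 0`, then for every initial datum `y₀` there is a
globally defined solution `y : ℝ → ℝⁿ` of `y' = B(y, y)` with `y(0) = y₀`. -/
theorem stmt_4 (n : ℕ)
    (B : EuclideanSpace ℝ (Fin n) →ₗ[ℝ] EuclideanSpace ℝ (Fin n) →ₗ[ℝ] EuclideanSpace ℝ (Fin n))
    (hBsymm : ∀ y z, B y z = B z y)
    (hcancel : ∀ y, ⟪B y y, y⟫ = 0)
    (y₀ : EuclideanSpace ℝ (Fin n)) :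
    ∃ y : ℝ → EuclideanSpace ℝ (Fin n),
      y 0 = y₀ ∧ ∀ t : ℝ, HasDerivAt y (B (y t) (y t)) t :=
  stmt_4_general n B hcancel y₀
end

section
/- For any real numbers α and A, the functions y₁(t) = A / cosh(Aαt) and y₂(t) = A tanh(Aαt) satisfy the pump gate system of ODEs: y₁'(t) = -α y₁(t) y₂(t) and y₂'(t) = α y₁(t)² for all t ∈ ℝ. -/
open Real

theorem Real.hasDerivAt_tanh (x : ℝ) : HasDerivAt tanh (1 / cosh x ^ 2) x := by
  have h := (hasDerivAt_sinh x).div (hasDerivAt_cosh x) (cosh_pos x).ne'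
  rw [show sinh / cosh = tanh by ext y; simp [tanh_eq_sinh_div_cosh]] at h
  refine h.congr_deriv ?_
  field_simp
  linear_combination cosh_sq_sub_sinh_sq x

theorem HasDerivAt.tanh {f : ℝ → ℝ} {f' x : ℝ} (hf : HasDerivAt f f' x) :
    HasDerivAt (fun y => Real.tanh (f y)) (f' / Real.cosh (f x) ^ 2) x :=
  ((Real.hasDerivAt_tanh (f x)).comp x hf).congr_deriv (by ring)

theorem HasDerivAt.inv_cosh {f : ℝ → ℝ} {f' x : ℝ} (hf : HasDerivAt f f' x) :
    HasDerivAt (fun y => (Real.cosh (f y))⁻¹)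
      (-(f' * Real.tanh (f x) / Real.cosh (f x))) x := by
  refine (hf.cosh.inv (cosh_pos (f x)).ne').congr_deriv ?_
  rw [tanh_eq_sinh_div_cosh]
  ring

/-- For any reals `α, A`, the functions `y₁(t) = A sech(Aαt)` and
`y₂(t) = A tanh(Aαt)` solve the pump gate system `y₁' = -α y₁ y₂`, `y₂' = α y₁²`. -/
theorem stmt_7 (α A : ℝ) :
    ∀ t : ℝ,
      HasDerivAt (fun t : ℝ => A / Real.cosh (A * α * t))
        (-α * (A / Real.cosh (A * α * t)) * (A * Real.tanh (A * α * t))) t ∧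
      HasDerivAt (fun t : ℝ => A * Real.tanh (A * α * t))
        (α * (A / Real.cosh (A * α * t)) ^ 2) t := by
  intro t
  have hu : HasDerivAt (fun t : ℝ => A * α * t) (A * α) t := hasDerivAt_const_mul (A * α)
  constructor
  · have h := hu.inv_cosh.const_mul A
    simp only [← div_eq_mul_inv] at h
    exact h.congr_deriv (by ring)
  · exact (hu.tanh.const_mul A).congr_deriv (by ring)
end
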